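/- Let V ⊂ (ℝ_max^n)² be a congruence, A ∈ ℝ_max^{n×n}, C ∈ ℝ_max^{q×n}, and set K := V^⊤. Let K*(Aᵗ,Cᵗ) denote the maximal (Aᵗ,Cᵗ)-controlled invariant semimodule contained in K. Then (K*(Aᵗ,Cᵗ))^⊥ is the minimal closed (C,A)-conditioned invariant congruence containing V: it is closed, (C,A)-conditioned invariant, contains V, and is contained in every closed (C,A)-conditioned invariant congruence containing V. Consequently the minimal (C,A)-conditioned invariant congruence V*(C,A) containing V satisfies V*(C,A) ⊆ (K*(Aᵗ,Cᵗ))^⊥, with equality whenever V*(C,A) is closed. -/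

import Mathlib

/-!
Max-plus (tropical) framework.

The max-plus semiring `ℝ_max = ℝ ∪ {-∞}` is modelled as `WithBot ℝ`:
max-plus addition `a ⊕ b = max a b` is the lattice `⊔`, and max-plus
multiplication `a ⊙ b = a + b` is `+` (with `⊥ = -∞` absorbing).
The topology induced by the metric `d(a,b) = |exp a - exp b|` is the
order topology.
-/

/-- The max-plus semiring `ℝ ∪ {-∞}`. -/
abbrev Rmax : Type := WithBot ℝ

/-- The topology of `ℝ_max` (the order topology, which coincides with the
topology induced by the metric `d(a,b) = |exp a - exp b|`). -/
instance : TopologicalSpace Rmax := Preorder.topology Rmax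

instance : OrderTopology Rmax := ⟨rfl⟩

/-- Vectors with entries in a (max-plus-like) semiring `R`. -/
abbrev Vec (R : Type*) (n : ℕ) := Fin n → R

section Defs

variable {R : Type*} [LinearOrder R] [Add R] [OrderBot R]

/-- Max-plus scalar action on a vector: `(λ x)_i = λ ⊙ x_i = λ + x_i`. -/
def sm {n : ℕ} (lam : R) (x : Vec R n) : Vec R n := fun i => lam + x i

/-- Max-plus matrix-vector product: `(A x)_i = ⊕_k A_{ik} ⊙ x_k = max_k (A_{ik} + x_k)`. -/
def mulVecMP {m n : ℕ} (A : Matrix (Fin m) (Fin n) R) (x : Vec R n) : Vec R m :=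
  fun i => Finset.univ.sup fun k => A i k + x k

/-- A subsemimodule (max-plus cone) of `R^n`: a subset stable under
max-plus linear combinations `λ x ⊕ μ y`. -/
def IsSemimodule {n : ℕ} (K : Set (Vec R n)) : Prop :=
  ∀ x ∈ K, ∀ y ∈ K, ∀ lam mu : R, (sm lam x ⊔ sm mu y) ∈ K

/-- Max-plus scalar action on a pair of vectors. -/
def smP {n : ℕ} (lam : R) (p : Vec R n × Vec R n) : Vec R n × Vec R n :=
  (sm lam p.1, sm lam p.2)

/-- A subsemimodule of `(R^n)²`. -/
def IsPairSemimodule {n : ℕ} (W : Set (Vec R n × Vec R n)) : Prop :=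
  ∀ p ∈ W, ∀ q ∈ W, ∀ lam mu : R, (smP lam p ⊔ smP mu q) ∈ W

/-- A congruence on `R^n`: an equivalence relation which is a
subsemimodule of `(R^n)²`. -/
def IsCongruence {n : ℕ} (W : Set (Vec R n × Vec R n)) : Prop :=
  Equivalence (fun x y => (x, y) ∈ W) ∧ IsPairSemimodule W

/-- The (max-plus) kernel of a matrix: `ker E = {(x,y) : E x = E y}`. -/
def kerM {p n : ℕ} (E : Matrix (Fin p) (Fin n) R) : Set (Vec R n × Vec R n) :=
  {w | mulVecMP E w.1 = mulVecMP E w.2}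

/-- The image of a matrix: `Im E = {E x}`. -/
def imM {n q : ℕ} (E : Matrix (Fin n) (Fin q) R) : Set (Vec R n) :=
  {y | ∃ x : Vec R q, y = mulVecMP E x}

/-- `A W = {(A x, A y) : (x,y) ∈ W}` for a set of pairs `W`. -/
def mapCong {n : ℕ} (A : Matrix (Fin n) (Fin n) R) (W : Set (Vec R n × Vec R n)) :
    Set (Vec R n × Vec R n) :=
  {p | ∃ w ∈ W, p = (mulVecMP A w.1, mulVecMP A w.2)}

/-- `A S = {A x : x ∈ S}`. -/
def mapSet {n : ℕ} (A : Matrix (Fin n) (Fin n) R) (S : Set (Vec R n)) : Set (Vec R n) :=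
  {y | ∃ x ∈ S, y = mulVecMP A x}

/-- `A⁻¹ S = {x : A x ∈ S}`. -/
def invSet {n : ℕ} (A : Matrix (Fin n) (Fin n) R) (S : Set (Vec R n)) : Set (Vec R n) :=
  {x | mulVecMP A x ∈ S}

/-- `A⁻¹ U = {(x,y) : (A x, A y) ∈ U}` for a set of pairs `U`. -/
def invPair {n : ℕ} (A : Matrix (Fin n) (Fin n) R) (U : Set (Vec R n × Vec R n)) :
    Set (Vec R n × Vec R n) :=
  {p | (mulVecMP A p.1, mulVecMP A p.2) ∈ U}

/-- The max-plus sum of two subsets of `R^n`: `X ⊕ Y = {x ⊕ y : x ∈ X, y ∈ Y}`. -/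
def setSum {n : ℕ} (X Y : Set (Vec R n)) : Set (Vec R n) :=
  {z | ∃ x ∈ X, ∃ y ∈ Y, z = x ⊔ y}

/-- The max-plus sum of two subsets of `(R^n)²`. -/
def pairSum {n : ℕ} (X Y : Set (Vec R n × Vec R n)) : Set (Vec R n × Vec R n) :=
  {z | ∃ x ∈ X, ∃ y ∈ Y, z = x ⊔ y}

/-- `W` is `(C,A)`-conditioned invariant: `A (W ∩ ker C) ⊆ W`. -/
def CondInv {n q : ℕ} (C : Matrix (Fin q) (Fin n) R) (A : Matrix (Fin n) (Fin n) R)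
    (W : Set (Vec R n × Vec R n)) : Prop :=
  mapCong A (W ∩ kerM C) ⊆ W

/-- `X` is `(A,B)`-controlled invariant: `A X ⊆ X ⊕ Im B`. -/
def ContrInv {n q : ℕ} (A : Matrix (Fin n) (Fin n) R) (B : Matrix (Fin n) (Fin q) R)
    (X : Set (Vec R n)) : Prop :=
  mapSet A X ⊆ setSum X (imM B)

/-- The max-plus scalar product `uᵗ v = ⊕_i u_i ⊙ v_i = max_i (u_i + v_i)`. -/
def dotMP {n : ℕ} (u v : Vec R n) : R := Finset.univ.sup fun i => u i + v i

/-- The orthogonal of a semimodule `X ⊆ R^n`: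
`X^⊥ = {(x,y) : xᵗ z = yᵗ z, ∀ z ∈ X}`. -/
def orthS {n : ℕ} (X : Set (Vec R n)) : Set (Vec R n × Vec R n) :=
  {p | ∀ z ∈ X, dotMP p.1 z = dotMP p.2 z}

/-- The orthogonal of a congruence (or set of pairs) `W ⊆ (R^n)²`:
`W^⊤ = {z : xᵗ z = yᵗ z, ∀ (x,y) ∈ W}`. -/
def orthC {n : ℕ} (W : Set (Vec R n × Vec R n)) : Set (Vec R n) :=
  {z | ∀ p ∈ W, dotMP p.1 z = dotMP p.2 z}

/-- The smallest congruence containing a set `S ⊆ (R^n)²`. -/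
def spanCong {n : ℕ} (S : Set (Vec R n × Vec R n)) : Set (Vec R n × Vec R n) :=
  ⋂₀ {W | IsCongruence W ∧ S ⊆ W}

/-- The smallest semimodule containing a set `S ⊆ R^n`. -/
def spanSet {n : ℕ} (S : Set (Vec R n)) : Set (Vec R n) :=
  ⋂₀ {K | IsSemimodule K ∧ S ⊆ K}

end Defs

/-!
The orthogonals `X ↦ X^⊥` and `W ↦ W^⊤` form an antitone Galois connection and take closed values.
Hence `(K*)^⊥` is a closed congruence containing `V`; it is conditioned invariant because
`(Ax)ᵗz = xᵗ(Aᵗz)` and `Aᵗ K* ⊆ K* ⊕ Im Cᵗ`.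

Minimality rests on two bidualities: `W^⊤⊥ = W` for a closed congruence `W`, and `X^⊥⊤ = X` for a
nonempty closed semimodule `X`. For the first, given a real vector `c`, the least scale `l` with
`w ⊔ l c ~ l c` is a max-plus linear form `w ↦ wᵗz` with `z ∈ W^⊤`; letting `c` decrease to `y`
separates any `(x, y) ∉ W` with `y ≤ x`. For the second, `t ∈ X^⊥⊤` is orthogonal to the pairs
`(-ρ, -p)`, `p` the supremum of the elements of `X` below `ρ`, which forces elements of `X` arbitrarily close
to `t`. Now let `W ⊇ V` be closed and conditioned invariant. By compactness of boxes `W^⊤ ⊕ Im Cᵗ`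
is closed, and every pair orthogonal to it lies in `W ∩ ker C`, which `A` maps into `W`. So `W^⊤`
is controlled invariant, `W^⊤ ⊆ K*` by maximality, and `(K*)^⊥ ⊆ W^⊤⊥ = W`.
-/

open Filter Topology

namespace MaxPlus

variable {n m : ℕ}

lemma bot_or_coe (a : Rmax) : a = ⊥ ∨ ∃ s : ℝ, a = ↑s := by
  induction a using WithBot.recBotCoe with
  | bot => exact .inl rfl
  | coe s => exact .inr ⟨s, rfl⟩

lemma add_finset_sup {ι : Type*} (a : Rmax) (s : Finset ι) (f : ι → Rmax) :
    a + s.sup f = s.sup fun i => a + f i :=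
  Finset.apply_sup_eq_sup_comp_of_linearOrder (a + ·) (fun _ _ h => add_le_add_right h a)
    (WithBot.add_bot a)

lemma finset_sup_add {ι : Type*} (a : Rmax) (s : Finset ι) (f : ι → Rmax) :
    s.sup f + a = s.sup fun i => f i + a := by
  simpa only [add_comm a] using add_finset_sup a s f

/-! ### Scalar action, scalar product and matrix action -/

def unit (j : Fin n) : Vec Rmax n := fun i => if i = j then 0 else ⊥

@[simp] lemma sm_apply (a : Rmax) (x : Vec Rmax n) (i : Fin n) : sm a x i = a + x i := rfl

@[simp] lemma sm_zero (x : Vec Rmax n) : sm 0 x = x := funext fun _ => zero_add _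

@[simp] lemma sm_bot (x : Vec Rmax n) : sm ⊥ x = ⊥ := funext fun _ => WithBot.bot_add _

lemma sm_sm (a b : Rmax) (x : Vec Rmax n) : sm a (sm b x) = sm (a + b) x :=
  funext fun _ => (add_assoc _ _ _).symm

lemma sm_sup (a : Rmax) (x y : Vec Rmax n) : sm a (x ⊔ y) = sm a x ⊔ sm a y :=
  funext fun _ => (max_add_add_left _ _ _).symm

lemma sm_mono (a : Rmax) {x y : Vec Rmax n} (h : x ≤ y) : sm a x ≤ sm a y :=
  fun i => add_le_add_right (h i) a

lemma sm_le_sm {a b : Rmax} (h : a ≤ b) (x : Vec Rmax n) : sm a x ≤ sm b x :=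
  fun i => add_le_add_left h (x i)

lemma sm_neg_sm (r : ℝ) (x : Vec Rmax n) : sm (↑(-r) : Rmax) (sm (↑r) x) = x := by
  rw [sm_sm, ← WithBot.coe_add, neg_add_cancel, WithBot.coe_zero, sm_zero]

lemma smP_mk (a : Rmax) (x y : Vec Rmax n) : smP a (x, y) = (sm a x, sm a y) := rfl

lemma unit_apply_self (j : Fin n) : unit j j = 0 := if_pos rfl

lemma unit_apply_of_ne {i j : Fin n} (h : i ≠ j) : unit j i = ⊥ := if_neg h

lemma eq_sup_sm_unit (w : Vec Rmax n) : w = Finset.univ.sup fun j => sm (w j) (unit j) := by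
  funext i
  rw [Finset.sup_apply]
  refine le_antisymm ?_ (Finset.sup_le fun j _ => ?_)
  · simpa [unit_apply_self] using
      Finset.le_sup (f := fun j => sm (w j) (unit j) i) (Finset.mem_univ i)
  · rcases eq_or_ne i j with rfl | h
    · simp [unit_apply_self]
    · simp [unit_apply_of_ne h]

lemma dotMP_comm (u v : Vec Rmax n) : dotMP u v = dotMP v u :=
  Finset.sup_congr rfl fun _ _ => add_comm _ _

lemma add_le_dotMP (u v : Vec Rmax n) (i : Fin n) : u i + v i ≤ dotMP u v :=
  Finset.le_sup (f := fun i => u i + v i) (Finset.mem_univ i)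

lemma dotMP_le_iff {u v : Vec Rmax n} {c : Rmax} : dotMP u v ≤ c ↔ ∀ i, u i + v i ≤ c := by
  simp [dotMP]

lemma sup_dotMP (x y z : Vec Rmax n) : dotMP (x ⊔ y) z = dotMP x z ⊔ dotMP y z := by
  simp only [dotMP, Pi.sup_apply, ← Finset.sup_sup, ← max_add_add_right]
  rfl

lemma sm_dotMP (a : Rmax) (x z : Vec Rmax n) : dotMP (sm a x) z = a + dotMP x z := by
  simp only [dotMP, sm_apply, add_finset_sup, add_assoc]

lemma dotMP_sup (x z z' : Vec Rmax n) : dotMP x (z ⊔ z') = dotMP x z ⊔ dotMP x z' := by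
  rw [dotMP_comm, sup_dotMP, dotMP_comm z, dotMP_comm z']

lemma dotMP_sm (a : Rmax) (x z : Vec Rmax n) : dotMP x (sm a z) = a + dotMP x z := by
  rw [dotMP_comm, sm_dotMP, dotMP_comm]

@[simp] lemma bot_dotMP (z : Vec Rmax n) : dotMP ⊥ z = ⊥ := by simp [dotMP]

@[simp] lemma dotMP_bot (z : Vec Rmax n) : dotMP z ⊥ = ⊥ := by rw [dotMP_comm, bot_dotMP]

lemma dotMP_unit (v : Vec Rmax n) (j : Fin n) : dotMP v (unit j) = v j := by
  refine le_antisymm (dotMP_le_iff.2 fun i => ?_) ?_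
  · rcases eq_or_ne i j with rfl | h
    · simp [unit_apply_self]
    · simp [unit_apply_of_ne h]
  · simpa [unit_apply_self] using add_le_dotMP v (unit j) j

lemma eq_of_forall_dotMP_eq {x y : Vec Rmax n} (h : ∀ u, dotMP x u = dotMP y u) : x = y :=
  funext fun j => by rw [← dotMP_unit x j, ← dotMP_unit y j, h]

lemma mulVecMP_apply (B : Matrix (Fin m) (Fin n) Rmax) (x : Vec Rmax n) (i : Fin m) :
    mulVecMP B x i = dotMP (B i) x := rfl

lemma mulVecMP_sup (B : Matrix (Fin m) (Fin n) Rmax) (u v : Vec Rmax n) :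
    mulVecMP B (u ⊔ v) = mulVecMP B u ⊔ mulVecMP B v :=
  funext fun i => dotMP_sup (B i) u v

lemma mulVecMP_sm (B : Matrix (Fin m) (Fin n) Rmax) (a : Rmax) (u : Vec Rmax n) :
    mulVecMP B (sm a u) = sm a (mulVecMP B u) :=
  funext fun i => dotMP_sm a (B i) u

lemma mulVecMP_dotMP (B : Matrix (Fin m) (Fin n) Rmax) (v : Vec Rmax n) (w : Vec Rmax m) :
    dotMP (mulVecMP B v) w = dotMP v (mulVecMP B.transpose w) := by
  simp only [dotMP, mulVecMP, Matrix.transpose_apply, finset_sup_add, add_finset_sup]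
  rw [Finset.sup_comm]
  exact Finset.sup_congr rfl fun k _ => Finset.sup_congr rfl fun i _ => by
    rw [add_comm (B i k), add_assoc]

end MaxPlus

open MaxPlus

namespace IsSemimodule

variable {n : ℕ} {X : Set (Vec Rmax n)} (hX : IsSemimodule X)
include hX

lemma sup_mem {x y : Vec Rmax n} (hx : x ∈ X) (hy : y ∈ X) : x ⊔ y ∈ X := by
  simpa using hX x hx y hy 0 0

lemma sm_mem {x : Vec Rmax n} (hx : x ∈ X) (a : Rmax) : sm a x ∈ X := by
  simpa using hX x hx x hx a a

lemma bot_mem {x : Vec Rmax n} (hx : x ∈ X) : ⊥ ∈ X := by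
  simpa using hX.sm_mem hx ⊥

lemma finset_sup_mem (hbot : ⊥ ∈ X) {ι : Type*} (s : Finset ι) {f : ι → Vec Rmax n}
    (hf : ∀ i ∈ s, f i ∈ X) : s.sup f ∈ X :=
  Finset.sup_induction hbot (fun _ hx _ hy => hX.sup_mem hx hy) hf

lemma setSum {Y : Set (Vec Rmax n)} (hY : IsSemimodule Y) :
    IsSemimodule (setSum X Y) := by
  rintro _ ⟨x, hx, y, hy, rfl⟩ _ ⟨x', hx', y', hy', rfl⟩ a b
  exact ⟨_, hX x hx x' hx' a b, _, hY y hy y' hy' a b, by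
    rw [sm_sup, sm_sup, sup_sup_sup_comm]⟩

end IsSemimodule

namespace IsCongruence

variable {n : ℕ} {W : Set (Vec Rmax n × Vec Rmax n)} (hW : IsCongruence W)
include hW

lemma refl (x : Vec Rmax n) : (x, x) ∈ W := hW.1.refl x

lemma symm {x y : Vec Rmax n} (h : (x, y) ∈ W) : (y, x) ∈ W := hW.1.symm h

lemma trans {x y z : Vec Rmax n} (h : (x, y) ∈ W) (h' : (y, z) ∈ W) : (x, z) ∈ W :=
  hW.1.trans h h'

lemma sup_mem {p p' : Vec Rmax n × Vec Rmax n} (hp : p ∈ W) (hp' : p' ∈ W) : p ⊔ p' ∈ W := by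
  simpa [smP] using hW.2 p hp p' hp' 0 0

lemma smP_mem {p : Vec Rmax n × Vec Rmax n} (hp : p ∈ W) (a : Rmax) : smP a p ∈ W := by
  simpa using hW.2 p hp p hp a a

lemma sup_right_mem {x y : Vec Rmax n} (h : (x, y) ∈ W) (z : Vec Rmax n) :
    (x ⊔ z, y ⊔ z) ∈ W :=
  hW.sup_mem h (hW.refl z)

lemma sup_self_left_mem {x y : Vec Rmax n} (h : (x, y) ∈ W) : (x ⊔ y, y) ∈ W := by
  simpa using hW.sup_right_mem h y

lemma sup_self_right_mem {x y : Vec Rmax n} (h : (x, y) ∈ W) : (x ⊔ y, x) ∈ W := by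
  simpa [sup_comm] using hW.sup_self_left_mem (hW.symm h)

end IsCongruence

namespace MaxPlus

variable {n m : ℕ}

lemma orthS_isCongruence (K : Set (Vec Rmax n)) : IsCongruence (orthS K) := by
  refine ⟨⟨fun _ _ _ => rfl, fun h z hz => (h z hz).symm,
    fun h h' z hz => (h z hz).trans (h' z hz)⟩, fun _ hp _ hp' a b z hz => ?_⟩
  simp only [smP, Prod.fst_sup, Prod.snd_sup, sup_dotMP, sm_dotMP, hp z hz, hp' z hz]

lemma orthC_isSemimodule (W : Set (Vec Rmax n × Vec Rmax n)) : IsSemimodule (orthC W) :=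
  fun _ hz _ hz' _ _ p hp => by simp only [dotMP_sup, dotMP_sm, hz p hp, hz' p hp]

lemma subset_orthS_iff {W : Set (Vec Rmax n × Vec Rmax n)} {K : Set (Vec Rmax n)} :
    W ⊆ orthS K ↔ K ⊆ orthC W :=
  ⟨fun h _ hz _ hp => h hp _ hz, fun h _ hp _ hz => h hz _ hp⟩

lemma orthS_anti {K K' : Set (Vec Rmax n)} (h : K ⊆ K') : orthS K' ⊆ orthS K :=
  fun _ hp z hz => hp z (h hz)

lemma orthC_anti {W W' : Set (Vec Rmax n × Vec Rmax n)} (h : W ⊆ W') : orthC W' ⊆ orthC W :=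
  fun _ hz p hp => hz p (h hp)

def ofReal (ρ : Fin n → ℝ) : Vec Rmax n := fun i => ρ i

@[simp] lemma ofReal_apply (ρ : Fin n → ℝ) (i : Fin n) : ofReal ρ i = ρ i := rfl

/-! ### Topology of `ℝ_max` -/

instance {ι : Type*} {π : ι → Type*} [∀ i, TopologicalSpace (π i)] [∀ i, Max (π i)]
    [∀ i, ContinuousSup (π i)] : ContinuousSup (∀ i, π i) :=
  ⟨continuous_pi fun i => ((continuous_apply i).comp continuous_fst).sup
    ((continuous_apply i).comp continuous_snd)⟩

lemma continuous_coe : Continuous ((↑) : ℝ → Rmax) := by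
  refine continuous_iff_continuousAt.2 fun a => tendsto_order.2 ⟨fun b hb => ?_, fun b hb => ?_⟩
  · induction b using WithBot.recBotCoe with
    | bot => exact Eventually.of_forall fun _ => WithBot.bot_lt_coe _
    | coe r =>
      exact (eventually_gt_nhds (WithBot.coe_lt_coe.1 hb)).mono fun _ => WithBot.coe_lt_coe.2
  · induction b using WithBot.recBotCoe with
    | bot => exact absurd hb not_lt_bot
    | coe r =>
      exact (eventually_lt_nhds (WithBot.coe_lt_coe.1 hb)).mono fun _ => WithBot.coe_lt_coe.2

lemma tendsto_coe_atBot : Tendsto ((↑) : ℝ → Rmax) atBot (𝓝 ⊥) := by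
  refine tendsto_order.2 ⟨fun b hb => absurd hb not_lt_bot, fun b hb => ?_⟩
  induction b using WithBot.recBotCoe with
  | bot => exact absurd hb (lt_irrefl _)
  | coe r => exact (eventually_lt_atBot r).mono fun _ => WithBot.coe_lt_coe.2

lemma tendsto_coe_unbotD (a : Vec Rmax n) :
    Tendsto (fun r : ℝ => ofReal fun i => (a i).unbotD r) atBot (𝓝 a) := by
  refine tendsto_pi_nhds.2 fun i => ?_
  show Tendsto (fun r : ℝ => (((a i).unbotD r : ℝ) : Rmax)) atBot (𝓝 (a i))
  induction a i using WithBot.recBotCoe with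
  | bot => simpa using tendsto_coe_atBot
  | coe s => simp

lemma continuous_add_left (c : Rmax) : Continuous (c + ·) := by
  induction c using WithBot.recBotCoe with
  | bot => simpa using continuous_const
  | coe r =>
    refine Monotone.continuous_of_surjective (fun _ _ h => add_le_add_right h _) fun b => ?_
    exact ⟨↑(-r) + b, by rw [← add_assoc, ← WithBot.coe_add, add_neg_cancel, WithBot.coe_zero,
      zero_add]⟩

lemma continuous_sm_coe (c : Vec Rmax n) : Continuous fun l : ℝ => sm (↑l) c :=
  continuous_pi fun i => by
    simpa only [sm_apply, add_comm _ (c i)] using (continuous_add_left (c i)).comp' continuous_coe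

lemma continuous_dotMP (u : Vec Rmax n) : Continuous (dotMP u) :=
  Continuous.finset_sup_apply fun i _ => (continuous_add_left (u i)).comp (continuous_apply i)

lemma continuous_dotMP_left (v : Vec Rmax n) : Continuous (dotMP · v) := by
  simpa only [dotMP_comm _ v] using continuous_dotMP v

lemma continuous_mulVecMP (B : Matrix (Fin m) (Fin n) Rmax) : Continuous (mulVecMP B) :=
  continuous_pi fun i => continuous_dotMP (B i)

lemma isClosed_orthS (K : Set (Vec Rmax n)) : IsClosed (orthS K) := by
  simp only [orthS, Set.ofPred_forall]
  exact isClosed_iInter fun z => isClosed_iInter fun _ =>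
    isClosed_eq ((continuous_dotMP_left z).comp continuous_fst)
      ((continuous_dotMP_left z).comp continuous_snd)

lemma isClosed_orthC (W : Set (Vec Rmax n × Vec Rmax n)) : IsClosed (orthC W) := by
  simp only [orthC, Set.ofPred_forall]
  exact isClosed_iInter fun p => isClosed_iInter fun _ =>
    isClosed_eq (continuous_dotMP p.1) (continuous_dotMP p.2)

lemma le_ofReal_unbotD (a : Vec Rmax n) (r : ℝ) : a ≤ ofReal fun i => (a i).unbotD r :=
  fun i => WithBot.le_coe_unbotD (a i) r

/-! ### Biduality for closed congruences -/

/-- The scales `l` such that `w ≤ l c` modulo `W`. -/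
def dominatingScales (W : Set (Vec Rmax n × Vec Rmax n)) (c w : Vec Rmax n) : Set ℝ :=
  {l | (w ⊔ sm (↑l) c, sm (↑l) c) ∈ W}

section DominatingScales

variable {W : Set (Vec Rmax n × Vec Rmax n)} (hW : IsCongruence W) {c : Vec Rmax n}
include hW

lemma dominatingScales_mono {w : Vec Rmax n} {l l' : ℝ} (hl : l ∈ dominatingScales W c w)
    (hll' : l ≤ l') : l' ∈ dominatingScales W c w := by
  have hle : sm (↑l : Rmax) c ≤ sm (↑l') c := sm_le_sm (WithBot.coe_le_coe.2 hll') c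
  simpa [dominatingScales, sup_assoc, sup_eq_right.2 hle] using hW.sup_right_mem hl (sm (↑l') c)

lemma dominatingScales_anti {w w' : Vec Rmax n} (h : w ≤ w') :
    dominatingScales W c w' ⊆ dominatingScales W c w := fun l hl => by
  have hjoin : (w' ⊔ sm (↑l) c, w ⊔ sm (↑l) c) ∈ W := by
    simpa [sup_eq_left.2 (sup_le_sup_right h _)] using hW.sup_right_mem hl (w ⊔ sm (↑l) c)
  exact hW.trans (hW.symm hjoin) hl

lemma dominatingScales_subset_of_mem {a b : Vec Rmax n} (hab : (a, b) ∈ W) :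
    dominatingScales W c b ⊆ dominatingScales W c a := fun l hl => by
  simpa [dominatingScales, sup_assoc] using hW.trans (hW.sup_right_mem hab (sm (↑l) c)) hl

lemma bot_mem_dominatingScales (l : ℝ) : l ∈ dominatingScales W c ⊥ := by
  simpa [dominatingScales] using hW.refl (sm (↑l) c)

lemma sup_mem_dominatingScales {v v' : Vec Rmax n} {l : ℝ} (hv : l ∈ dominatingScales W c v)
    (hv' : l ∈ dominatingScales W c v') : l ∈ dominatingScales W c (v ⊔ v') := by
  simpa [dominatingScales, sup_sup_sup_comm] using hW.sup_mem hv hv'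

lemma finset_sup_mem_dominatingScales {ι : Type*} (s : Finset ι) {f : ι → Vec Rmax n} {l : ℝ}
    (hf : ∀ i ∈ s, l ∈ dominatingScales W c (f i)) : l ∈ dominatingScales W c (s.sup f) :=
  Finset.sup_induction (p := fun v => l ∈ dominatingScales W c v) (bot_mem_dominatingScales hW l)
    (fun _ hv _ hv' => sup_mem_dominatingScales hW hv hv') hf

lemma add_mem_dominatingScales_sm {v : Vec Rmax n} {l : ℝ} (hl : l ∈ dominatingScales W c v)
    (r : ℝ) : r + l ∈ dominatingScales W c (sm (↑r) v) := by
  simpa [dominatingScales, smP_mk, sm_sup, sm_sm] using hW.smP_mem hl ↑r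

lemma mem_dominatingScales_sm_iff {v : Vec Rmax n} {l r : ℝ} :
    l ∈ dominatingScales W c (sm (↑r) v) ↔ l - r ∈ dominatingScales W c v := by
  refine ⟨fun hl => ?_, fun hl => by simpa using add_mem_dominatingScales_sm hW hl r⟩
  simpa [sm_neg_sm, neg_add_eq_sub] using add_mem_dominatingScales_sm hW hl (-r)

lemma neg_mem_dominatingScales_unit (ρ : Fin n → ℝ) (j : Fin n) :
    -ρ j ∈ dominatingScales W (ofReal ρ) (unit j) := by
  have hle : unit j ≤ sm (↑(-ρ j)) (ofReal ρ) := fun i => by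
    rcases eq_or_ne i j with rfl | h
    · simp [unit_apply_self, ← WithBot.coe_add]
    · simp [unit_apply_of_ne h]
  simpa [dominatingScales, sup_eq_right.2 hle] using hW.refl _

omit hW in
lemma isClosed_dominatingScales (hWc : IsClosed W) (w : Vec Rmax n) :
    IsClosed (dominatingScales W c w) :=
  hWc.preimage ((continuous_const.sup (continuous_sm_coe c)).prodMk (continuous_sm_coe c))

end DominatingScales

/-- `w ↦ wᵗ (dualVec W c)` is the least scale `l` with `w ≤ l c` modulo `W`, hence it is constant
on the classes of `W`. -/
noncomputable def dualVec (W : Set (Vec Rmax n × Vec Rmax n)) (c : Vec Rmax n) : Vec Rmax n :=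
  fun j => sInf ((↑) '' dominatingScales W c (unit j))

section DualVec

variable {W : Set (Vec Rmax n × Vec Rmax n)} (hW : IsCongruence W) (ρ : Fin n → ℝ)
include hW

lemma dotMP_dualVec_le {w : Vec Rmax n} {l : ℝ} (hl : l ∈ dominatingScales W (ofReal ρ) w) :
    dotMP w (dualVec W (ofReal ρ)) ≤ ↑l := by
  refine dotMP_le_iff.2 fun j => ?_
  induction hwj : w j using WithBot.recBotCoe with
  | bot => simp
  | coe s =>
    have hsj : sm (↑s) (unit j) ≤ w := by
      rw [← hwj]
      conv_rhs => rw [eq_sup_sm_unit w]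
      exact Finset.le_sup (f := fun j => sm (w j) (unit j)) (Finset.mem_univ j)
    have hmem : l - s ∈ dominatingScales W (ofReal ρ) (unit j) :=
      (mem_dominatingScales_sm_iff hW).1 (dominatingScales_anti hW hsj hl)
    calc (↑s : Rmax) + dualVec W (ofReal ρ) j ≤ ↑s + ↑(l - s) :=
          add_le_add_right (csInf_le (OrderBot.bddBelow _) (Set.mem_image_of_mem _ hmem)) _
      _ = ↑l := by rw [← WithBot.coe_add, add_sub_cancel]

lemma mem_of_dotMP_dualVec_lt {w : Vec Rmax n} {u : ℝ}
    (hu : dotMP w (dualVec W (ofReal ρ)) < ↑u) : u ∈ dominatingScales W (ofReal ρ) w := by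
  rw [eq_sup_sm_unit w]
  refine finset_sup_mem_dominatingScales hW _ fun j _ => ?_
  induction hwj : w j using WithBot.recBotCoe with
  | bot => simpa using bot_mem_dominatingScales hW u
  | coe s =>
    refine (mem_dominatingScales_sm_iff hW).2 ?_
    have hlt : dualVec W (ofReal ρ) j < ↑(u - s) := by
      have := (add_le_dotMP w _ j).trans_lt hu
      rwa [hwj, ← add_sub_cancel s u, WithBot.coe_add,
        WithBot.add_lt_add_iff_left WithBot.coe_ne_bot] at this
    obtain ⟨_, ⟨l, hl, rfl⟩, hlu⟩ := exists_lt_of_csInf_lt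
      ((Set.nonempty_of_mem (neg_mem_dominatingScales_unit hW ρ j)).image _) hlt
    exact dominatingScales_mono hW hl (WithBot.coe_lt_coe.1 hlu).le

lemma dualVec_mem_orthC : dualVec W (ofReal ρ) ∈ orthC W := by
  suffices key : ∀ a b, (a, b) ∈ W →
      dotMP b (dualVec W (ofReal ρ)) ≤ dotMP a (dualVec W (ofReal ρ)) from
    fun p hp => le_antisymm (key _ _ (hW.symm hp)) (key _ _ hp)
  intro a b hab
  refine le_of_forall_gt_imp_ge_of_dense fun v hv => ?_
  obtain ⟨u, rfl⟩ := WithBot.ne_bot_iff_exists.1 (ne_bot_of_gt hv)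
  exact dotMP_dualVec_le hW ρ (dominatingScales_subset_of_mem hW (hW.symm hab)
    (mem_of_dotMP_dualVec_lt hW ρ hv))

lemma mem_of_dotMP_dualVec_le (hWc : IsClosed W) {w : Vec Rmax n} {l : ℝ}
    (hl : dotMP w (dualVec W (ofReal ρ)) ≤ ↑l) : l ∈ dominatingScales W (ofReal ρ) w := by
  have hIoi : Set.Ioi l ⊆ dominatingScales W (ofReal ρ) w := fun u hu =>
    mem_of_dotMP_dualVec_lt hW ρ (hl.trans_lt (WithBot.coe_lt_coe.2 hu))
  exact (isClosed_dominatingScales hWc w).closure_subset_iff.2 hIoi (by simp)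

end DualVec

section Biduality

variable {W : Set (Vec Rmax n × Vec Rmax n)} (hW : IsCongruence W) (hWc : IsClosed W)
include hW hWc

/-- Take `c ≥ y` real with `c → y`: the dual vector of `W` for `c` forces `x ⊔ c ~ c`. -/
lemma mem_of_le_of_mem_orthS_orthC {x y : Vec Rmax n} (hyx : y ≤ x)
    (hxy : (x, y) ∈ orthS (orthC W)) : (x, y) ∈ W := by
  have hmem : ∀ r : ℝ,
      (x ⊔ ofReal fun i => (y i).unbotD r, ofReal fun i => (y i).unbotD r) ∈ W := by
    intro r
    set ρ : Fin n → ℝ := fun i => (y i).unbotD r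
    have hy : (0 : ℝ) ∈ dominatingScales W (ofReal ρ) y := by
      show (y ⊔ sm (↑(0 : ℝ)) (ofReal ρ), sm (↑(0 : ℝ)) (ofReal ρ)) ∈ W
      rw [WithBot.coe_zero, sm_zero, sup_eq_right.2 (le_ofReal_unbotD y r)]
      exact hW.refl _
    have hx : dotMP x (dualVec W (ofReal ρ)) ≤ ↑(0 : ℝ) := by
      rw [hxy _ (dualVec_mem_orthC hW ρ)]
      exact dotMP_dualVec_le hW ρ hy
    simpa [dominatingScales] using mem_of_dotMP_dualVec_le hW ρ hWc hx
  have hlim := ((tendsto_const_nhds (x := x)).sup_nhds (tendsto_coe_unbotD y)).prodMk_nhds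
    (tendsto_coe_unbotD y)
  rw [sup_eq_left.2 hyx] at hlim
  exact hWc.mem_of_tendsto hlim (Eventually.of_forall hmem)

lemma orthS_orthC_subset : orthS (orthC W) ⊆ W := by
  rintro ⟨x, y⟩ hxy
  have hE := orthS_isCongruence (orthC W)
  exact hW.trans (hW.symm (mem_of_le_of_mem_orthS_orthC hW hWc le_sup_left
    (hE.sup_self_right_mem hxy))) (mem_of_le_of_mem_orthS_orthC hW hWc le_sup_right
    (hE.sup_self_left_mem hxy))

end Biduality

/-! ### Biduality for closed semimodules -/

lemma dotMP_neg_le_zero {t : Vec Rmax n} {ρ : Fin n → ℝ} (htρ : t ≤ ofReal ρ) :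
    dotMP t (ofReal (-ρ)) ≤ 0 :=
  dotMP_le_iff.2 fun j => by
    rcases bot_or_coe (t j) with htj | ⟨u, htj⟩
    · simp [htj]
    · have := htρ j
      simp only [htj, ofReal_apply, WithBot.coe_le_coe] at this
      simp only [htj, ofReal_apply, Pi.neg_apply, ← WithBot.coe_add, ← WithBot.coe_zero,
        WithBot.coe_le_coe]
      linarith

def belowValues (X : Set (Vec Rmax n)) (ρ : Fin n → ℝ) (i : Fin n) : Set ℝ :=
  {r | ∃ v ∈ X, v ≤ ofReal ρ ∧ v i = ↑r}

/-- The pair `(-ρ, -p)`, where `p` is the coordinatewise supremum of the members of `X` below `ρ`.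
The junk value `sSup ∅ = 0` only occurs at coordinates where every member of `X` is `⊥`. -/
noncomputable def residualPair (X : Set (Vec Rmax n)) (ρ : Fin n → ℝ) :
    Vec Rmax n × Vec Rmax n :=
  (ofReal (-ρ), ofReal fun i => -sSup (belowValues X ρ i))

section Residual

variable {X : Set (Vec Rmax n)} (ρ : Fin n → ℝ)

lemma le_of_mem_belowValues {i : Fin n} {r : ℝ} (hr : r ∈ belowValues X ρ i) : r ≤ ρ i := by
  obtain ⟨v, -, hv, hvi⟩ := hr
  simpa [hvi] using hv i

lemma bddAbove_belowValues (i : Fin n) : BddAbove (belowValues X ρ i) :=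
  ⟨ρ i, fun _ => le_of_mem_belowValues ρ⟩

/-- Scaling `v` by `-m`, where `m = vᵗ(-ρ)`, brings it below `ρ`. -/
lemma exists_sub_mem_belowValues (hX : IsSemimodule X) {v : Vec Rmax n} (hv : v ∈ X) {i : Fin n}
    {s : ℝ} (hs : v i = ↑s) :
    ∃ m : ℝ, dotMP v (ofReal (-ρ)) = ↑m ∧ s - m ∈ belowValues X ρ i := by
  have hne : dotMP v (ofReal (-ρ)) ≠ ⊥ :=
    ne_bot_of_le_ne_bot (by simp [hs, ← WithBot.coe_add]) (add_le_dotMP v _ i)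
  obtain ⟨m, hm⟩ := WithBot.ne_bot_iff_exists.1 hne
  refine ⟨m, hm.symm, sm (↑(-m)) v, hX.sm_mem hv _, fun j => ?_,
    by simp [hs, ← WithBot.coe_add, neg_add_eq_sub]⟩
  have hj := hm ▸ add_le_dotMP v (ofReal (-ρ)) j
  rcases bot_or_coe (v j) with hvj | ⟨t, hvj⟩
  · simp [hvj]
  · simp only [hvj, ofReal_apply, Pi.neg_apply, sm_apply, ← WithBot.coe_add,
      WithBot.coe_le_coe] at hj ⊢
    linarith

lemma residualPair_mem_orthS (hX : IsSemimodule X) : residualPair X ρ ∈ orthS X := by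
  intro v hv
  simp only [residualPair, dotMP_comm _ v]
  refine le_antisymm (dotMP_le_iff.2 fun i => ?_) (dotMP_le_iff.2 fun i => ?_)
  all_goals
    rcases bot_or_coe (v i) with hvi | ⟨s, hvi⟩
    · simp [hvi]
    obtain ⟨m, hm, hmem⟩ := exists_sub_mem_belowValues ρ hX hv hvi
  · refine le_trans ?_ (add_le_dotMP v _ i)
    have := csSup_le ⟨_, hmem⟩ fun _ => le_of_mem_belowValues ρ
    simp only [hvi, ofReal_apply, Pi.neg_apply, ← WithBot.coe_add, WithBot.coe_le_coe]
    linarith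
  · have := le_csSup (bddAbove_belowValues ρ i) hmem
    simp only [hvi, hm, ofReal_apply, ← WithBot.coe_add, WithBot.coe_le_coe]
    linarith

end Residual

section SemimoduleBiduality

variable {X : Set (Vec Rmax n)} (hX : IsSemimodule X) {t : Vec Rmax n}

lemma exists_ne_bot_of_mem_orthC_orthS (ht : t ∈ orthC (orthS X)) {i : Fin n} (hti : t i ≠ ⊥) :
    ∃ v ∈ X, v i ≠ ⊥ := by
  by_contra! h
  have hunit : (unit i, ⊥) ∈ orthS X := fun v hv => by
    simp [dotMP_comm (unit i), dotMP_unit, h v hv]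
  exact hti (by simpa [dotMP_comm (unit i), dotMP_unit] using ht _ hunit)

include hX

/-- `t` is orthogonal to the residual pair, and `tᵗ(-ρ) ≤ 0`. -/
lemma le_sSup_belowValues (ht : t ∈ orthC (orthS X)) {ρ : Fin n → ℝ} (htρ : t ≤ ofReal ρ)
    {i : Fin n} {s : ℝ} (hti : t i = ↑s) : s ≤ sSup (belowValues X ρ i) := by
  have h := (add_le_dotMP t _ i).trans
    (((dotMP_comm _ _).trans (ht _ (residualPair_mem_orthS ρ hX)).symm).trans_le
      ((dotMP_comm _ _).trans_le (dotMP_neg_le_zero htρ)))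
  simp only [residualPair, hti, ofReal_apply, ← WithBot.coe_add, ← WithBot.coe_zero,
    WithBot.coe_le_coe] at h
  linarith

lemma exists_mem_le_ofReal_apply_le (ht : t ∈ orthC (orthS X)) (hbot : ⊥ ∈ X)
    {ρ : Fin n → ℝ} (htρ : t ≤ ofReal ρ) {ε : ℝ} (hε : 0 < ε) (i : Fin n) :
    ∃ v ∈ X, v ≤ ofReal ρ ∧ t i ≤ ↑ε + v i := by
  rcases bot_or_coe (t i) with hti | ⟨s, hti⟩
  · exact ⟨⊥, hbot, bot_le, by simp [hti]⟩
  obtain ⟨v, hv, hvi⟩ := exists_ne_bot_of_mem_orthC_orthS ht (hti ▸ WithBot.coe_ne_bot)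
  obtain ⟨sv, hsv⟩ := WithBot.ne_bot_iff_exists.1 hvi
  obtain ⟨_, _, hmem⟩ := exists_sub_mem_belowValues ρ hX hv hsv.symm
  obtain ⟨r, ⟨w, hw, hwρ, hwi⟩, hr⟩ := exists_lt_of_lt_csSup ⟨_, hmem⟩
    (show s - ε < sSup (belowValues X ρ i) by linarith [le_sSup_belowValues hX ht htρ hti])
  refine ⟨w, hw, hwρ, ?_⟩
  rw [hti, hwi, ← WithBot.coe_add, WithBot.coe_le_coe]
  linarith

lemma exists_mem_le_ofReal_le_sm (ht : t ∈ orthC (orthS X)) (hbot : ⊥ ∈ X) {ρ : Fin n → ℝ}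
    (htρ : t ≤ ofReal ρ) {ε : ℝ} (hε : 0 < ε) : ∃ v ∈ X, v ≤ ofReal ρ ∧ t ≤ sm (↑ε) v := by
  choose v hvX hvρ hvt using exists_mem_le_ofReal_apply_le hX ht hbot htρ hε
  refine ⟨Finset.univ.sup v, hX.finset_sup_mem hbot _ fun i _ => hvX i,
    Finset.sup_le fun i _ => hvρ i, fun i => (hvt i).trans ?_⟩
  exact add_le_add_right ((Finset.le_sup (f := v) (Finset.mem_univ i)) i) _

theorem orthC_orthS_subset (hXc : IsClosed X) (hne : X.Nonempty) : orthC (orthS X) ⊆ X := by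
  intro t ht
  choose v hvX hvρ hvt using fun r : ℝ => exists_mem_le_ofReal_le_sm hX ht
    (hX.bot_mem hne.some_mem) (le_ofReal_unbotD t r) (Real.exp_pos r)
  have hlower : Tendsto (fun r : ℝ => sm (↑(-Real.exp r)) t) atBot (𝓝 t) := by
    have hexp : Tendsto (fun r => -Real.exp r) atBot (𝓝 0) := by
      simpa using Real.tendsto_exp_atBot.neg
    simpa [Function.comp_def] using ((continuous_sm_coe t).tendsto 0).comp hexp
  have hv : Tendsto v atBot (𝓝 t) := tendsto_pi_nhds.2 fun i =>
    tendsto_of_tendsto_of_tendsto_of_le_of_le (tendsto_pi_nhds.1 hlower i)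
      (tendsto_pi_nhds.1 (tendsto_coe_unbotD t) i)
      (fun r => sm_neg_sm (Real.exp r) (v r) ▸ sm_mono (↑(-Real.exp r)) (hvt r) i)
      (fun r => hvρ r i)
  exact hXc.mem_of_tendsto hv (Eventually.of_forall hvX)

end SemimoduleBiduality

/-! ### Closedness of `X ⊕ Im D` -/

lemma isClosed_of_forall_isClosed_inter_Icc {S : Set (Vec Rmax n)}
    (h : ∀ B : ℝ, IsClosed (S ∩ Set.Icc ⊥ (ofReal fun _ => B))) : IsClosed S := by
  refine isClosed_of_closure_subset fun t ht => ?_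
  obtain ⟨B, hB⟩ := Finite.exists_le fun i => (t i).unbotD 0
  set U := {x : Vec Rmax n | ∀ i, x i < ↑(B + 1)}
  have hU : IsOpen U := by
    simp only [U, Set.ofPred_forall]
    exact isOpen_iInter_of_finite fun i => isOpen_lt (continuous_apply i) continuous_const
  have htU : t ∈ U := fun i => (WithBot.le_coe_unbotD (t i) 0).trans_lt
    (WithBot.coe_lt_coe.2 (by linarith [hB i]))
  have hsub : U ∩ S ⊆ S ∩ Set.Icc ⊥ (ofReal fun _ => B + 1) :=
    fun x hx => ⟨hx.2, bot_le, fun i => (hx.1 i).le⟩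
  exact ((h (B + 1)).closure_subset_iff.2 hsub (hU.inter_closure ⟨htU, ht⟩)).1

lemma mulVecMP_inf_eq {q : ℕ} (D : Matrix (Fin n) (Fin q) Rmax) {B K : ℝ}
    (hK : ∀ i k, B - (D i k).unbotD 0 ≤ K) {u : Vec Rmax q}
    (hu : mulVecMP D u ≤ ofReal fun _ => B) :
    mulVecMP D (u ⊓ ofReal fun _ => K) = mulVecMP D u := by
  refine funext fun i => Finset.sup_congr rfl fun k _ => ?_
  rcases bot_or_coe (D i k) with hd | ⟨d, hd⟩
  · simp [hd]
  have hik : D i k + u k ≤ ↑B := (add_le_dotMP (D i) u k).trans (hu i)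
  have hK' := hK i k
  rcases bot_or_coe (u k) with hk | ⟨s, hk⟩
  · simp [hk]
  simp only [hd, hk, ← WithBot.coe_add, WithBot.coe_le_coe, WithBot.unbotD_coe] at hik hK'
  simp only [Pi.inf_apply, hk, hd, ofReal_apply, inf_eq_left.2 (WithBot.coe_le_coe.2
    (by linarith : s ≤ K))]

theorem isClosed_setSum_imM {q : ℕ} {X : Set (Vec Rmax n)} (hXc : IsClosed X)
    (D : Matrix (Fin n) (Fin q) Rmax) : IsClosed (setSum X (imM D)) := by
  refine isClosed_of_forall_isClosed_inter_Icc fun B => ?_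
  obtain ⟨K, hK⟩ := Finite.exists_le fun p : Fin n × Fin q => B - (D p.1 p.2).unbotD 0
  set φ : Vec Rmax n × Vec Rmax q → Vec Rmax n := fun p => p.1 ⊔ mulVecMP D p.2
  have hφ : Continuous φ := continuous_fst.sup ((continuous_mulVecMP D).comp continuous_snd)
  have heq : setSum X (imM D) ∩ Set.Icc ⊥ (ofReal fun _ => B) =
      φ '' ((X ∩ Set.Icc ⊥ (ofReal fun _ => B)) ×ˢ Set.Icc ⊥ (ofReal fun _ => K)) ∩
        Set.Icc ⊥ (ofReal fun _ => B) := by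
    refine Set.Subset.antisymm ?_ ?_
    · rintro _ ⟨⟨w, hw, _, ⟨u, rfl⟩, rfl⟩, hbox⟩
      refine ⟨⟨(w, u ⊓ ofReal fun _ => K), ⟨⟨hw, bot_le, le_sup_left.trans hbox.2⟩,
        bot_le, inf_le_right⟩, ?_⟩, hbox⟩
      simp only [φ, mulVecMP_inf_eq D (fun i k => hK (i, k)) (le_sup_right.trans hbox.2)]
    · rintro _ ⟨⟨⟨w, u⟩, ⟨⟨hw, -⟩, -⟩, rfl⟩, hbox⟩
      exact ⟨⟨w, hw, _, ⟨u, rfl⟩, rfl⟩, hbox⟩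
  rw [heq]
  exact ((((isCompact_Icc.inter_left hXc).prod isCompact_Icc).image hφ).inter_right
    isClosed_Icc).isClosed

/-! ### Conditioned and controlled invariance -/

lemma isSemimodule_imM {q : ℕ} (D : Matrix (Fin n) (Fin q) Rmax) : IsSemimodule (imM D) := by
  rintro _ ⟨u, rfl⟩ _ ⟨u', rfl⟩ a b
  exact ⟨sm a u ⊔ sm b u', by rw [mulVecMP_sup, mulVecMP_sm, mulVecMP_sm]⟩

lemma bot_mem_imM {q : ℕ} (D : Matrix (Fin n) (Fin q) Rmax) : ⊥ ∈ imM D :=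
  ⟨⊥, funext fun i => by simp [mulVecMP_apply]⟩

lemma bot_mem_orthC (W : Set (Vec Rmax n × Vec Rmax n)) : ⊥ ∈ orthC W := fun p _ => by simp

lemma subset_setSum_left {X Y : Set (Vec Rmax n)} (hY : ⊥ ∈ Y) : X ⊆ setSum X Y :=
  fun x hx => ⟨x, hx, ⊥, hY, (sup_bot_eq x).symm⟩

lemma subset_setSum_right {X Y : Set (Vec Rmax n)} (hX : ⊥ ∈ X) : Y ⊆ setSum X Y :=
  fun y hy => ⟨⊥, hX, y, hy, (bot_sup_eq y).symm⟩

variable {q : ℕ} {A : Matrix (Fin n) (Fin n) Rmax} {C : Matrix (Fin q) (Fin n) Rmax}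

lemma condInv_orthS {K : Set (Vec Rmax n)} (hK : ContrInv A.transpose C.transpose K) :
    CondInv C A (orthS K) := by
  rintro _ ⟨⟨x, y⟩, ⟨hxy, hC⟩, rfl⟩ z hz
  obtain ⟨w, hw, _, ⟨u, rfl⟩, heq⟩ := hK ⟨z, hz, rfl⟩
  have hCu : dotMP x (mulVecMP C.transpose u) = dotMP y (mulVecMP C.transpose u) := by
    rw [← mulVecMP_dotMP, ← mulVecMP_dotMP, show mulVecMP C x = mulVecMP C y from hC]
  simp only [mulVecMP_dotMP, heq, dotMP_sup, hxy w hw, hCu]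

/-- Every pair orthogonal to the closed semimodule `W^⊤ ⊕ Im Cᵗ` lies in `W ∩ ker C` by biduality,
so `A` maps it into `W`, and `Aᵗ z` is orthogonal to it. -/
lemma contrInv_orthC {W : Set (Vec Rmax n × Vec Rmax n)} (hW : IsCongruence W)
    (hWc : IsClosed W) (hWA : CondInv C A W) : ContrInv A.transpose C.transpose (orthC W) := by
  rintro _ ⟨z, hz, rfl⟩
  set S := setSum (orthC W) (imM C.transpose)
  have hS : IsSemimodule S := (orthC_isSemimodule W).setSum (isSemimodule_imM _)
  refine orthC_orthS_subset hS (isClosed_setSum_imM (isClosed_orthC W) _)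
    ⟨⊥, subset_setSum_left (bot_mem_imM _) (bot_mem_orthC W)⟩ fun p hp => ?_
  have hpW : p ∈ W := orthS_orthC_subset hW hWc (orthS_anti (subset_setSum_left (bot_mem_imM _)) hp)
  have hpC : p ∈ kerM C := eq_of_forall_dotMP_eq fun u => by
    rw [mulVecMP_dotMP, mulVecMP_dotMP]
    exact hp _ (subset_setSum_right (bot_mem_orthC W) ⟨u, rfl⟩)
  simpa only [mulVecMP_dotMP] using hz _ (hWA ⟨p, ⟨hpW, hpC⟩, rfl⟩)

lemma isCongruence_sInter {𝒲 : Set (Set (Vec Rmax n × Vec Rmax n))}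
    (h : ∀ W ∈ 𝒲, IsCongruence W) : IsCongruence (⋂₀ 𝒲) :=
  ⟨⟨fun x W hW => (h W hW).refl x, fun hxy W hW => (h W hW).symm (hxy W hW),
    fun hxy hyz W hW => (h W hW).trans (hxy W hW) (hyz W hW)⟩,
    fun p hp p' hp' a b W hW => (h W hW).2 p (hp W hW) p' (hp' W hW) a b⟩

lemma condInv_sInter {𝒲 : Set (Set (Vec Rmax n × Vec Rmax n))} (h : ∀ W ∈ 𝒲, CondInv C A W) :
    CondInv C A (⋂₀ 𝒲) := by
  rintro _ ⟨p, ⟨hp, hC⟩, rfl⟩ W hW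
  exact h W hW ⟨p, ⟨hp W hW, hC⟩, rfl⟩

end MaxPlus

open MaxPlus

theorem minimal_closed_conditioned_invariant_general
    {n q : ℕ} (A : Matrix (Fin n) (Fin n) Rmax) (C : Matrix (Fin q) (Fin n) Rmax)
    (V : Set (Vec Rmax n × Vec Rmax n))
    (Kstar : Set (Vec Rmax n))
    (hK2 : ContrInv A.transpose C.transpose Kstar)
    (hK3 : Kstar ⊆ orthC V)
    (hK4 : ∀ X : Set (Vec Rmax n), IsSemimodule X →
      ContrInv A.transpose C.transpose X → X ⊆ orthC V → X ⊆ Kstar)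
    (Vstar : Set (Vec Rmax n × Vec Rmax n))
    (hVstar : Vstar = ⋂₀ {W | IsCongruence W ∧ CondInv C A W ∧ V ⊆ W}) :
    IsClosed (orthS Kstar) ∧ IsCongruence (orthS Kstar) ∧
      CondInv C A (orthS Kstar) ∧ V ⊆ orthS Kstar ∧
      (∀ W : Set (Vec Rmax n × Vec Rmax n), IsCongruence W → IsClosed W →
        CondInv C A W → V ⊆ W → orthS Kstar ⊆ W) ∧
      Vstar ⊆ orthS Kstar ∧
      (IsClosed Vstar → Vstar = orthS Kstar) := by
  have hcong := orthS_isCongruence Kstar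
  have hcond : CondInv C A (orthS Kstar) := condInv_orthS hK2
  have hVK : V ⊆ orthS Kstar := subset_orthS_iff.2 hK3
  have hmin : ∀ W : Set (Vec Rmax n × Vec Rmax n), IsCongruence W → IsClosed W →
      CondInv C A W → V ⊆ W → orthS Kstar ⊆ W := fun W hW hWc hWA hVW =>
    (orthS_anti (hK4 _ (orthC_isSemimodule W) (contrInv_orthC hW hWc hWA)
      (orthC_anti hVW))).trans (orthS_orthC_subset hW hWc)
  have hVstarK : Vstar ⊆ orthS Kstar := hVstar ▸ Set.sInter_subset_of_mem ⟨hcong, hcond, hVK⟩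
  refine ⟨isClosed_orthS Kstar, hcong, hcond, hVK, hmin, hVstarK,
    fun hc => hVstarK.antisymm (hmin _ ?_ hc ?_ ?_)⟩ <;> subst hVstar
  · exact isCongruence_sInter fun W hW => hW.1
  · exact condInv_sInter fun W hW => hW.2.1
  · exact Set.subset_sInter fun W hW => hW.2.2

/-- Let `V` be a congruence and `K := V^⊤`.  If `K*` is the
maximal `(Aᵗ,Cᵗ)`-controlled invariant semimodule contained in `K`, then
`(K*)^⊥` is the minimal closed `(C,A)`-conditioned invariant congruence
containing `V`: it is closed, `(C,A)`-conditioned invariant, contains `V`,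
and is contained in every closed `(C,A)`-conditioned invariant congruence
containing `V`.  Consequently the minimal `(C,A)`-conditioned invariant
congruence `V* = V*(C,A)` containing `V` (the intersection of all such)
satisfies `V* ⊆ (K*)^⊥`, with equality whenever `V*` is closed. -/
theorem minimal_closed_conditioned_invariant
    {n q : ℕ} (A : Matrix (Fin n) (Fin n) Rmax) (C : Matrix (Fin q) (Fin n) Rmax)
    (V : Set (Vec Rmax n × Vec Rmax n)) (hV : IsCongruence V)
    (Kstar : Set (Vec Rmax n))
    (hK1 : IsSemimodule Kstar)
    (hK2 : ContrInv A.transpose C.transpose Kstar)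
    (hK3 : Kstar ⊆ orthC V)
    (hK4 : ∀ X : Set (Vec Rmax n), IsSemimodule X →
      ContrInv A.transpose C.transpose X → X ⊆ orthC V → X ⊆ Kstar)
    (Vstar : Set (Vec Rmax n × Vec Rmax n))
    (hVstar : Vstar = ⋂₀ {W | IsCongruence W ∧ CondInv C A W ∧ V ⊆ W}) :
    IsClosed (orthS Kstar) ∧ IsCongruence (orthS Kstar) ∧
      CondInv C A (orthS Kstar) ∧ V ⊆ orthS Kstar ∧
      (∀ W : Set (Vec Rmax n × Vec Rmax n), IsCongruence W → IsClosed W →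
        CondInv C A W → V ⊆ W → orthS Kstar ⊆ W) ∧
      Vstar ⊆ orthS Kstar ∧
      (IsClosed Vstar → Vstar = orthS Kstar) :=
  minimal_closed_conditioned_invariant_general A C V Kstar hK2 hK3 hK4 Vstar hVstar
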